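/- Let m, d be positive natural numbers, T : Matrix (Fin m) (Fin d) ℝ, and K(T) = {x ∈ ℝ^m : Matrix.vecMul x T = 0 and ∑ i, x i = 0}. Suppose K(T) ≠ {0}, and let A : Matrix (Fin m) (Fin m) ℝ satisfy A i j > 0 for all i, j and ∑ j, A i j = 1 for every i. Then the set of matrices A' : Matrix (Fin m) (Fin m) ℝ with A' i j ≥ 0 for all i, j, ∑ j, A' i j = 1 for every i, and A' * T = A * T, is infinite. In particular there exists A' ≠ A with these properties, so A is non-identifiable even among row-stochastic matrices. -/

import Mathlib

/-! Stacking a nonzero `x ∈ K(T)` as every row gives `B ≠ 0` with `B * T = 0` and zero row sums.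
Since `A` is strictly positive, `A + t • B` stays entrywise nonnegative for all `t` near `0`, and
these matrices are pairwise distinct. -/

/-- `KT T` is the subspace `{x ∈ ℝ^m : xᵀT = 0 ∧ ∑ i, x i = 0}`, i.e. the kernel of the
transpose of the augmented matrix `[T,1]`, viewed as a submodule of Euclidean space. -/
noncomputable def KT {m d : ℕ} (T : Matrix (Fin m) (Fin d) ℝ) :
    Submodule ℝ (EuclideanSpace ℝ (Fin m)) where
  carrier := {x | Matrix.vecMul x T = 0 ∧ ∑ i, x i = 0}
  add_mem' := by
    rintro a b ⟨ha1, ha2⟩ ⟨hb1, hb2⟩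
    refine ⟨?_, ?_⟩
    · show Matrix.vecMul (a + b) T = 0
      simp [Matrix.add_vecMul, ha1, hb1]
    · show ∑ i, (a + b) i = 0
      simp only [PiLp.add_apply, Finset.sum_add_distrib, ha2, hb2, add_zero]
  zero_mem' := by
    refine ⟨?_, ?_⟩
    · show Matrix.vecMul (0 : Fin m → ℝ) T = 0
      simp
    · show ∑ i, (0 : EuclideanSpace ℝ (Fin m)) i = 0
      simp
  smul_mem' := by
    rintro c a ⟨ha1, ha2⟩
    refine ⟨?_, ?_⟩
    · show Matrix.vecMul (c • a) T = 0
      simp [Matrix.smul_vecMul, ha1]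
    · show ∑ i, (c • a) i = 0
      simp only [PiLp.smul_apply, smul_eq_mul, ← Finset.mul_sum, ha2, mul_zero]

open Filter Topology Matrix

section Perturbation

variable {ι κ : Type*} [Fintype ι]

theorem eventually_nhds_zero_pos_add_smul [Finite κ] {A B : Matrix ι κ ℝ}
    (hA : ∀ i j, 0 < A i j) : ∀ᶠ t in 𝓝 (0 : ℝ), ∀ i j, 0 < (A + t • B) i j := by
  simp only [eventually_all]
  intro i j
  have hlim : Tendsto (fun t : ℝ => A i j + t * B i j) (𝓝 0) (𝓝 (A i j)) :=
    (by fun_prop : Continuous fun t : ℝ => A i j + t * B i j).tendsto' 0 _ (by simp)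
  simpa using hlim.eventually_const_lt (hA i j)

theorem infinite_rowStochastic_mul_eq {A B : Matrix ι ι ℝ} {T : Matrix ι κ ℝ}
    (hpos : ∀ i j, 0 < A i j) (hrow : ∀ i, ∑ j, A i j = 1)
    (hB : B ≠ 0) (hBT : B * T = 0) (hBrow : ∀ i, ∑ j, B i j = 0) :
    {A' : Matrix ι ι ℝ |
        (∀ i j, 0 ≤ A' i j) ∧ (∀ i, ∑ j, A' i j = 1) ∧ A' * T = A * T}.Infinite := by
  have hinj : Function.Injective fun t : ℝ => A + t • B :=
    (add_right_injective A).comp (smul_left_injective ℝ hB)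
  refine ((infinite_of_mem_nhds 0 (eventually_nhds_zero_pos_add_smul (B := B) hpos)).image
    hinj.injOn).mono ?_
  rintro _ ⟨t, ht, rfl⟩
  refine ⟨fun i j => (ht i j).le, fun i => ?_, ?_⟩
  · simp [Finset.sum_add_distrib, ← Finset.mul_sum, hrow, hBrow]
  · rw [Matrix.add_mul, Matrix.smul_mul, hBT, smul_zero, add_zero]

end Perturbation

theorem stmt_14_general (m d : ℕ) (T : Matrix (Fin m) (Fin d) ℝ)
    (hK : KT T ≠ ⊥) (A : Matrix (Fin m) (Fin m) ℝ)
    (hpos : ∀ i j, 0 < A i j) (hrow : ∀ i, ∑ j, A i j = 1) :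
    {A' : Matrix (Fin m) (Fin m) ℝ |
        (∀ i j, 0 ≤ A' i j) ∧ (∀ i, ∑ j, A' i j = 1) ∧ A' * T = A * T}.Infinite ∧
      ∃ A' : Matrix (Fin m) (Fin m) ℝ, A' ≠ A ∧ (∀ i j, 0 ≤ A' i j) ∧
        (∀ i, ∑ j, A' i j = 1) ∧ A' * T = A * T := by
  obtain ⟨x, ⟨hxT, hxsum⟩, hx0⟩ := (Submodule.ne_bot_iff _).mp hK
  have hx : x.ofLp ≠ 0 := by simpa using hx0
  obtain ⟨j, -⟩ := Function.ne_iff.mp hx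
  have : Nonempty (Fin m) := ⟨j⟩
  have hinf := infinite_rowStochastic_mul_eq (B := replicateRow (Fin m) x.ofLp) hpos hrow
    (by simpa using hx)
    (by rw [← replicateRow_vecMul]; simpa using hxT) (by simpa using hxsum)
  obtain ⟨A', hA', hne⟩ := hinf.nontrivial.exists_ne A
  exact ⟨hinf, A', hne, hA'⟩

/-- If `K(T) ≠ {0}` then a softmax attention matrix `A` is non-identifiable even among
row-stochastic matrices: infinitely many entrywise-nonnegative matrices with rows summing
to `1` produce the same output `A * T`; in particular some such `A' ≠ A` exists. -/
theorem stmt_14 (m d : ℕ) (hm : 0 < m) (hd : 0 < d) (T : Matrix (Fin m) (Fin d) ℝ)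
    (hK : KT T ≠ ⊥) (A : Matrix (Fin m) (Fin m) ℝ)
    (hpos : ∀ i j, 0 < A i j) (hrow : ∀ i, ∑ j, A i j = 1) :
    {A' : Matrix (Fin m) (Fin m) ℝ |
        (∀ i j, 0 ≤ A' i j) ∧ (∀ i, ∑ j, A' i j = 1) ∧ A' * T = A * T}.Infinite ∧
      ∃ A' : Matrix (Fin m) (Fin m) ℝ, A' ≠ A ∧ (∀ i j, 0 ≤ A' i j) ∧
        (∀ i, ∑ j, A' i j = 1) ∧ A' * T = A * T :=
  stmt_14_general m d T hK A hpos hrow
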